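/- arXiv:2204.10155 — 7 statements merged into one kernel-verified Lean document; each statement's English description precedes it below -/
import Mathlib

section
/- Let S be a monoid with exactly one minimal left ideal L and exactly one minimal right ideal R. If S is right pseudo-finite, then L = R is the minimal ideal of S, is a group, and this group is finite. -/
def seqN {α : Type*} (r : α → α → Prop) : ℕ → α → α → Prop
  | 0, a, b => a = b
  | n + 1, a, b => ∃ c, r a c ∧ seqN r n c b

/-- One step of an `X`-sequence in a monoid `S` as a right `S`-act:
`a = x * s`, `b = y * s` with `x, y ∈ X`, `s ∈ S`. -/
def mStep {S : Type*} [Monoid S] (X : Set S) (a b : S) : Prop :=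
  ∃ x ∈ X, ∃ y ∈ X, ∃ s : S, a = x * s ∧ b = y * s

/-- A monoid is right pseudo-finite if some finite `X ⊆ S` and bound `N` connect any
two elements by an `X`-sequence of length at most `N`. -/
def MRightPF (S : Type*) [Monoid S] : Prop :=
  ∃ X : Finset S, ∃ N : ℕ, ∀ a b : S, ∃ n ≤ N, seqN (mStep (X : Set S)) n a b

/-- `L` is a left ideal of `S`. -/
def IsLeftIdeal {S : Type*} [Monoid S] (L : Set S) : Prop :=
  L.Nonempty ∧ ∀ a ∈ L, ∀ s : S, s * a ∈ L

/-- `R` is a right ideal of `S`. -/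
def IsRightIdeal {S : Type*} [Monoid S] (R : Set S) : Prop :=
  R.Nonempty ∧ ∀ a ∈ R, ∀ s : S, a * s ∈ R

/-- `I` is a two-sided ideal of `S`. -/
def IsIdeal {S : Type*} [Monoid S] (I : Set S) : Prop :=
  I.Nonempty ∧ ∀ a ∈ I, ∀ s : S, s * a ∈ I ∧ a * s ∈ I

/-- `L` is a minimal left ideal: a left ideal containing no proper left ideal. -/
def IsMinLeftIdeal {S : Type*} [Monoid S] (L : Set S) : Prop :=
  IsLeftIdeal L ∧ ∀ L' ⊆ L, IsLeftIdeal L' → L' = L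

/-- `R` is a minimal right ideal: a right ideal containing no proper right ideal. -/
def IsMinRightIdeal {S : Type*} [Monoid S] (R : Set S) : Prop :=
  IsRightIdeal R ∧ ∀ R' ⊆ R, IsRightIdeal R' → R' = R

/-- `K` is the minimal ideal of `S`: an ideal contained in every ideal. -/
def IsMinIdeal {S : Type*} [Monoid S] (K : Set S) : Prop :=
  IsIdeal K ∧ ∀ I : Set S, IsIdeal I → K ⊆ I

/-- Auxiliary: products `p * f₁ * ⋯ * fₙ` seeded at `e` with factors from `F`. -/
def chainSet {S : Type*} [Monoid S] (F : Set S) (e : S) : ℕ → Set S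
  | 0 => {e}
  | n + 1 => Set.image2 (· * ·) (chainSet F e n) F

lemma chainSet_finite {S : Type*} [Monoid S] {F : Set S} (hF : F.Finite) (e : S) :
    ∀ n, (chainSet F e n).Finite
  | 0 => Set.finite_singleton e
  | n + 1 => Set.Finite.image2 _ (chainSet_finite hF e n) hF

/-- If a right pseudo-finite monoid `S` has exactly one minimal left ideal `L` and
exactly one minimal right ideal `R`, then `L = R` is the minimal ideal of `S`, is a
group, and this group is finite. -/
theorem unique_min_left_right_ideal_of_rightPF {S : Type*} [Monoid S]
    (L R : Set S)
    (hL : IsMinLeftIdeal L) (hLuniq : ∀ L' : Set S, IsMinLeftIdeal L' → L' = L)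
    (hR : IsMinRightIdeal R) (hRuniq : ∀ R' : Set S, IsMinRightIdeal R' → R' = R)
    (hpf : MRightPF S) :
    L = R ∧ IsMinIdeal L ∧
    (∃ e ∈ L, (∀ a ∈ L, e * a = a ∧ a * e = a) ∧
      ∀ a ∈ L, ∃ b ∈ L, a * b = e ∧ b * a = e) ∧
    L.Finite := by
  classical
  obtain ⟨⟨⟨a₀, ha₀⟩, hLleft⟩, hLmin⟩ := hL
  have hLne : L.Nonempty := ⟨a₀, ha₀⟩
  -- L is closed under right multiplication
  have hLright : ∀ a ∈ L, ∀ t : S, a * t ∈ L := by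
    intro a ha t
    have h1 : IsMinLeftIdeal ((· * t) '' L) := by
      refine ⟨⟨⟨a * t, a, ha, rfl⟩, ?_⟩, ?_⟩
      · rintro b ⟨c, hc, rfl⟩ s
        exact ⟨s * c, hLleft c hc s, mul_assoc s c t⟩
      · intro L' hsub hL'
        have hJ : IsLeftIdeal {u | u ∈ L ∧ u * t ∈ L'} := by
          refine ⟨?_, ?_⟩
          · obtain ⟨b, hb⟩ := hL'.1
            obtain ⟨u, hu, rfl⟩ := hsub hb
            exact ⟨u, hu, hb⟩
          · rintro u ⟨huL, huL'⟩ s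
            exact ⟨hLleft u huL s, by rw [mul_assoc]; exact hL'.2 _ huL' s⟩
        have hJL := hLmin _ (fun u hu => hu.1) hJ
        refine Set.Subset.antisymm hsub ?_
        rintro b ⟨u, hu, rfl⟩
        exact (hJL.symm.subset hu).2
    have := hLuniq _ h1
    rw [← this]
    exact ⟨a, ha, rfl⟩
  -- R is closed under left multiplication
  have hRleft : ∀ a ∈ R, ∀ t : S, t * a ∈ R := by
    intro a ha t
    have h1 : IsMinRightIdeal ((t * ·) '' R) := by
      refine ⟨⟨⟨t * a, a, ha, rfl⟩, ?_⟩, ?_⟩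
      · rintro b ⟨c, hc, rfl⟩ s
        exact ⟨c * s, hR.1.2 c hc s, (mul_assoc t c s).symm⟩
      · intro R' hsub hR'
        have hJ : IsRightIdeal {u | u ∈ R ∧ t * u ∈ R'} := by
          refine ⟨?_, ?_⟩
          · obtain ⟨b, hb⟩ := hR'.1
            obtain ⟨u, hu, rfl⟩ := hsub hb
            exact ⟨u, hu, hb⟩
          · rintro u ⟨huR, huR'⟩ s
            exact ⟨hR.1.2 u huR s, by rw [← mul_assoc]; exact hR'.2 _ huR' s⟩
        have hJR := hR.2 _ (fun u hu => hu.1) hJ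
        refine Set.Subset.antisymm hsub ?_
        rintro b ⟨u, hu, rfl⟩
        exact (hJR.symm.subset hu).2
    have := hRuniq _ h1
    rw [← this]
    exact ⟨a, ha, rfl⟩
  have hLideal : IsIdeal L := ⟨hLne, fun a ha s => ⟨hLleft a ha s, hLright a ha s⟩⟩
  have hRideal : IsIdeal R := ⟨hR.1.1, fun a ha s => ⟨hRleft a ha s, hR.1.2 a ha s⟩⟩
  -- L is contained in every ideal
  have hLsubI : ∀ I : Set S, IsIdeal I → L ⊆ I := by
    intro I hI
    obtain ⟨⟨i, hi⟩, hImul⟩ := hI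
    have h1 : IsLeftIdeal (L ∩ I) :=
      ⟨⟨a₀ * i, hLright a₀ ha₀ i, (hImul i hi a₀).1⟩,
       fun a ha s => ⟨hLleft a ha.1 s, (hImul a ha.2 s).1⟩⟩
    have := hLmin _ Set.inter_subset_left h1
    intro x hx
    exact (this.symm.subset hx).2
  have hRsubI : ∀ I : Set S, IsIdeal I → R ⊆ I := by
    intro I hI
    obtain ⟨⟨i, hi⟩, hImul⟩ := hI
    obtain ⟨r₀, hr₀⟩ := hR.1.1
    have h1 : IsRightIdeal (R ∩ I) :=
      ⟨⟨r₀ * i, hR.1.2 r₀ hr₀ i, (hImul i hi r₀).1⟩,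
       fun a ha s => ⟨hR.1.2 a ha.1 s, (hImul a ha.2 s).2⟩⟩
    have := hR.2 _ Set.inter_subset_left h1
    intro x hx
    exact (this.symm.subset hx).2
  have hLR : L = R := Set.Subset.antisymm (hLsubI R hRideal) (hRsubI L hLideal)
  -- La = L and aL = L for a ∈ L
  have hSa : ∀ a ∈ L, ∀ b ∈ L, ∃ c ∈ L, c * a = b := by
    intro a ha
    have hla : IsLeftIdeal ((· * a) '' L) := by
      refine ⟨⟨a₀ * a, a₀, ha₀, rfl⟩, ?_⟩
      rintro u ⟨c, hc, rfl⟩ s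
      exact ⟨s * c, hLleft c hc s, mul_assoc s c a⟩
    have hsub : (· * a) '' L ⊆ L := by
      rintro u ⟨c, hc, rfl⟩
      exact hLright c hc a
    have heq := hLmin _ hsub hla
    intro b hb
    rw [← heq] at hb
    obtain ⟨c, hc, hca⟩ := hb
    exact ⟨c, hc, hca⟩
  have haS : ∀ a ∈ L, ∀ b ∈ L, ∃ c ∈ L, a * c = b := by
    intro a ha
    have hra : IsRightIdeal ((a * ·) '' L) := by
      refine ⟨⟨a * a₀, a₀, ha₀, rfl⟩, ?_⟩
      rintro u ⟨c, hc, rfl⟩ s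
      exact ⟨c * s, hLright c hc s, (mul_assoc a c s).symm⟩
    have hsub : (a * ·) '' L ⊆ R := by
      rintro u ⟨c, hc, rfl⟩
      exact hLR ▸ hLleft c hc a
    have heq := hR.2 _ hsub hra
    intro b hb
    have hb' : b ∈ R := hLR ▸ hb
    rw [← heq] at hb'
    obtain ⟨c, hc, hcu⟩ := hb'
    exact ⟨c, hc, hcu⟩
  -- identity element
  obtain ⟨e, heL, hea⟩ := hSa a₀ ha₀ a₀ ha₀
  have heleft : ∀ x ∈ L, e * x = x := by
    intro x hx
    obtain ⟨t, _, hat⟩ := haS a₀ ha₀ x hx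
    rw [← hat, ← mul_assoc, hea]
  obtain ⟨f, hfL, haf⟩ := haS a₀ ha₀ a₀ ha₀
  have hfright : ∀ x ∈ L, x * f = x := by
    intro x hx
    obtain ⟨t, _, hta⟩ := hSa a₀ ha₀ x hx
    rw [← hta, mul_assoc, haf]
  have hef : e = f := ((hfright e heL).symm).trans (heleft f hfL)
  have heright : ∀ x ∈ L, x * e = x := by
    intro x hx
    rw [hef]
    exact hfright x hx
  -- inverses
  have hinv : ∀ a ∈ L, ∃ b ∈ L, a * b = e ∧ b * a = e := by
    intro a ha
    obtain ⟨b, hb, hba⟩ := hSa a ha e heL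
    obtain ⟨c, hc, hac⟩ := haS a ha e heL
    have hbc : b = c := by
      calc b = b * e := (heright b hb).symm
        _ = b * (a * c) := by rw [hac]
        _ = (b * a) * c := (mul_assoc b a c).symm
        _ = e * c := by rw [hba]
        _ = c := heleft c hc
    exact ⟨b, hb, by rw [hbc]; exact hac, hba⟩
  refine ⟨hLR, ⟨hLideal, hLsubI⟩, ⟨e, heL, fun a ha => ⟨heleft a ha, heright a ha⟩, hinv⟩, ?_⟩
  -- finiteness
  obtain ⟨X, N, hX⟩ := hpf
  have hinv' : ∀ a : S, ∃ b : S, a ∈ L → (a * b = e ∧ b * a = e) := by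
    intro a
    by_cases h : a ∈ L
    · obtain ⟨b, _, h1, h2⟩ := hinv a h
      exact ⟨b, fun _ => ⟨h1, h2⟩⟩
    · exact ⟨1, fun h' => absurd h' h⟩
  choose inv hinvspec using hinv'
  set g : S × S → S := fun p => (e * p.2 * e) * inv (e * p.1 * e) with hgdef
  have he' : ∀ a : S, e * (a * e) = a * e := fun a => heleft _ (hLleft e heL a)
  have hg : ∀ x y s : S, y * (s * e) = g (x, y) * (x * (s * e)) := by
    intro x y s
    have hse : s * e ∈ L := hLleft e heL s
    have hexe : e * x * e ∈ L := hLright _ (hLright e heL x) e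
    have hinvx := hinvspec (e * x * e) hexe
    have h1 : x * (s * e) = (e * x * e) * (s * e) := by
      calc x * (s * e) = e * (x * (s * e)) := (heleft _ (hLleft _ hse x)).symm
        _ = (e * x) * (s * e) := (mul_assoc e x (s * e)).symm
        _ = (e * x) * (e * (s * e)) := by rw [heleft _ hse]
        _ = (e * x * e) * (s * e) := (mul_assoc (e * x) e (s * e)).symm
    calc y * (s * e) = e * (y * (s * e)) := (heleft _ (hLleft _ hse y)).symm
      _ = (e * y) * (s * e) := (mul_assoc e y (s * e)).symm
      _ = (e * y) * (e * (s * e)) := by rw [heleft _ hse]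
      _ = (e * y * e) * (s * e) := (mul_assoc (e * y) e (s * e)).symm
      _ = (e * y * e) * (e * (s * e)) := by rw [heleft _ hse]
      _ = (e * y * e) * ((inv (e * x * e) * (e * x * e)) * (s * e)) := by rw [hinvx.2]
      _ = (e * y * e) * (inv (e * x * e) * ((e * x * e) * (s * e))) := by
            rw [mul_assoc (inv (e * x * e)) (e * x * e) (s * e)]
      _ = ((e * y * e) * inv (e * x * e)) * ((e * x * e) * (s * e)) :=
            (mul_assoc _ _ _).symm
      _ = g (x, y) * (x * (s * e)) := by rw [← h1]
  -- chain sets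
  have hkey : ∀ n : ℕ, ∀ a b : S, seqN (mStep (X : Set S)) n a b →
      ∃ p ∈ chainSet (g '' ((X : Set S) ×ˢ (X : Set S))) e n, b * e = p * (a * e) := by
    intro n
    induction n with
    | zero =>
      intro a b h
      cases h
      exact ⟨e, rfl, (he' a).symm⟩
    | succ n ih =>
      rintro a b ⟨c, ⟨x, hx, y, hy, s, ha, hc⟩, hrest⟩
      obtain ⟨p, hp, hbe⟩ := ih c b hrest
      refine ⟨p * g (x, y),
        Set.mem_image2_of_mem hp ⟨(x, y), Set.mk_mem_prod hx hy, rfl⟩, ?_⟩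
      have h1 : c * e = g (x, y) * (a * e) := by
        rw [ha, hc, mul_assoc y s e, mul_assoc x s e]
        exact hg x y s
      rw [hbe, h1]
      exact (mul_assoc p (g (x, y)) (a * e)).symm
  have hFfin : (g '' ((X : Set S) ×ˢ (X : Set S))).Finite :=
    ((X.finite_toSet.prod X.finite_toSet).image g)
  have hbig : ((fun p => p * e) ''
      ⋃ n ∈ Set.Iic N, chainSet (g '' ((X : Set S) ×ˢ (X : Set S))) e n).Finite :=
    (((Set.finite_Iic N).biUnion (fun n _ => chainSet_finite hFfin e n)).image _)
  refine hbig.subset ?_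
  intro u hu
  obtain ⟨n, hn, hseq⟩ := hX e u
  obtain ⟨p, hp, hue⟩ := hkey n e u hseq
  rw [heright u hu, heright e heL] at hue
  exact ⟨p, Set.mem_biUnion hn hp, hue.symm⟩
end

section
/- A monoid S is finitely absorbed if and only if S has a completely simple minimal ideal whose R-classes are finite. -/
/-- An ideal of the subsemigroup `K` of `S` (with `K` closed under multiplication). -/
def IsRelIdeal {S : Type*} [Monoid S] (K I : Set S) : Prop :=
  I.Nonempty ∧ I ⊆ K ∧ ∀ a ∈ I, ∀ k ∈ K, k * a ∈ I ∧ a * k ∈ I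

def IsRelLeftIdeal {S : Type*} [Monoid S] (K I : Set S) : Prop :=
  I.Nonempty ∧ I ⊆ K ∧ ∀ a ∈ I, ∀ k ∈ K, k * a ∈ I

def IsRelRightIdeal {S : Type*} [Monoid S] (K I : Set S) : Prop :=
  I.Nonempty ∧ I ⊆ K ∧ ∀ a ∈ I, ∀ k ∈ K, a * k ∈ I

/-- `K` is a completely simple semigroup (as a subsemigroup of `S`): it is simple and
has a minimal left ideal and a minimal right ideal. -/
def IsCompletelySimple {S : Type*} [Monoid S] (K : Set S) : Prop :=
  (∀ I : Set S, IsRelIdeal K I → I = K) ∧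
  (∃ L : Set S, IsRelLeftIdeal K L ∧ ∀ L', IsRelLeftIdeal K L' → L' ⊆ L → L' = L) ∧
  (∃ R : Set S, IsRelRightIdeal K R ∧ ∀ R', IsRelRightIdeal K R' → R' ⊆ R → R' = R)

/-- Green's `≤_R` preorder within the subsemigroup `K`: `a ≤_R b` iff `a ∈ b K¹`. -/
def relLeR {S : Type*} [Monoid S] (K : Set S) (a b : S) : Prop :=
  a = b ∨ ∃ k ∈ K, a = b * k

/-!
If `V` is a finite absorbing set, every left ideal contains some `S v` with `v ∈ V`, so a
minimal left ideal `L` exists and `L S` is the minimal ideal `K`. For `a ∈ K` the left ideal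
`S a` is minimal, and a pigeonhole argument on the pairs `(u, v) ∈ V × V` with
`u a^(n+1) = v` gives `a^(r+2) = a`. The idempotent `f = a^(r+1)` is a left identity on the
`R`-class of `a`, and an element `b` with `f b = b` is recovered from any pair `(u, u b)` in
`V × V`, so the `R`-classes are finite; for an idempotent `e ∈ L`, `e K` is a minimal right
ideal of `K`. Conversely, a minimal right ideal `R` of `K` equals `x K` for each `x ∈ R`, so
it lies in a single `R`-class and is finite, and it is absorbing: writing `x = x k`, we get
`x a = x (k a) ∈ R`.
-/

section

open Pointwise

variable {S : Type*} [Monoid S]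

def IsAbsorbing (V : Set S) : Prop :=
  ∀ a : S, ∃ u ∈ V, ∃ v ∈ V, u * a = v

def IsMinRelLeftIdeal (K L : Set S) : Prop :=
  IsRelLeftIdeal K L ∧ ∀ L', IsRelLeftIdeal K L' → L' ⊆ L → L' = L

def IsMinRelRightIdeal (K R : Set S) : Prop :=
  IsRelRightIdeal K R ∧ ∀ R', IsRelRightIdeal K R' → R' ⊆ R → R' = R

theorem isLeftIdeal_range_mul_right (a : S) : IsLeftIdeal (Set.range (· * a)) :=
  ⟨⟨a, 1, one_mul a⟩, by rintro _ ⟨s, rfl⟩ t; exact ⟨t * s, mul_assoc t s a⟩⟩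

theorem pow_succ_mem_range_mul_right (a : S) (r : ℕ) : a ^ (r + 1) ∈ Set.range (· * a) :=
  ⟨a ^ r, (pow_succ a r).symm⟩

theorem isIdempotentElem_pow_succ_of_pow_add_two_eq {a : S} {r : ℕ} (h : a ^ (r + 2) = a) :
    IsIdempotentElem (a ^ (r + 1)) := by
  unfold IsIdempotentElem
  rw [← pow_add, show r + 1 + (r + 1) = r + 2 + r by ring, pow_add, h, ← pow_succ']

namespace IsMinLeftIdeal

variable {L : Set S}

theorem range_mul_right_eq (hL : IsMinLeftIdeal L) {a : S} (ha : a ∈ L) :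
    Set.range (· * a) = L :=
  hL.2 _ (by rintro _ ⟨s, rfl⟩; exact hL.1.2 a ha s) (isLeftIdeal_range_mul_right a)

theorem exists_mul_eq (hL : IsMinLeftIdeal L) {a b : S} (ha : a ∈ L) (hb : b ∈ L) :
    ∃ s, s * a = b := by
  rw [← hL.range_mul_right_eq ha] at hb
  exact hb

theorem of_subset (hL : IsMinLeftIdeal L) {L' : Set S} (hL' : IsLeftIdeal L') (h : L' ⊆ L) :
    IsMinLeftIdeal L' := by
  rwa [hL.2 L' h hL']

theorem eq_of_isIdempotentElem (hL : IsMinLeftIdeal L) {e j : S} (he : e ∈ L) (hj : j ∈ L)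
    (hjj : IsIdempotentElem j) (hej : e * j = j) : j = e := by
  obtain ⟨w, hw⟩ := hL.exists_mul_eq hj he
  calc j = w * j * j := by rw [hw, hej]
    _ = e := by rw [mul_assoc, hjj, hw]

theorem subset_of_isIdeal (hL : IsMinLeftIdeal L) {I : Set S} (hI : IsIdeal I) : L ⊆ I := by
  obtain ⟨x, hx⟩ := hI.1
  obtain ⟨l, hl⟩ := hL.1.1
  have hLI : IsLeftIdeal (L ∩ I) :=
    ⟨⟨x * l, hL.1.2 l hl x, (hI.2 x hx l).2⟩,
      fun y hy s => ⟨hL.1.2 y hy.1 s, (hI.2 y hy.2 s).1⟩⟩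
  rw [← hL.2 _ Set.inter_subset_left hLI]
  exact Set.inter_subset_right

theorem image_mul_right (hL : IsMinLeftIdeal L) (t : S) : IsMinLeftIdeal ((· * t) '' L) := by
  refine ⟨⟨hL.1.1.image _, ?_⟩, fun L' hsub hL' => ?_⟩
  · rintro _ ⟨x, hx, rfl⟩ s
    exact ⟨s * x, hL.1.2 x hx s, mul_assoc s x t⟩
  have hP : IsLeftIdeal {x ∈ L | x * t ∈ L'} := by
    obtain ⟨z, hz⟩ := hL'.1
    obtain ⟨x, hx, rfl⟩ := hsub hz
    refine ⟨⟨x, hx, hz⟩, fun y hy s => ⟨hL.1.2 y hy.1 s, ?_⟩⟩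
    rw [mul_assoc]
    exact hL'.2 _ hy.2 s
  refine hsub.antisymm ?_
  rintro _ ⟨x, hx, rfl⟩
  rw [← hL.2 _ (Set.sep_subset _ _) hP] at hx
  exact hx.2

theorem isMinIdeal_mul_univ (hL : IsMinLeftIdeal L) : IsMinIdeal (L * Set.univ) := by
  refine ⟨⟨hL.1.1.mul Set.univ_nonempty, ?_⟩, fun I hI => ?_⟩
  · rintro _ ⟨l, hl, t, -, rfl⟩ s
    exact ⟨⟨s * l, hL.1.2 l hl s, t, trivial, mul_assoc s l t⟩,
      ⟨l, hl, t * s, trivial, (mul_assoc l t s).symm⟩⟩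
  · rintro _ ⟨l, hl, t, -, rfl⟩
    exact (hI.2 l (hL.subset_of_isIdeal hI hl) t).2

theorem isMinLeftIdeal_range_mul_right (hL : IsMinLeftIdeal L) {a : S}
    (ha : a ∈ L * Set.univ) : IsMinLeftIdeal (Set.range (· * a)) := by
  obtain ⟨l, hl, t, -, rfl⟩ := ha
  refine (hL.image_mul_right t).of_subset (isLeftIdeal_range_mul_right _) ?_
  rintro _ ⟨s, rfl⟩
  exact ⟨s * l, hL.1.2 l hl s, mul_assoc s l t⟩

theorem isMinRelLeftIdeal (hL : IsMinLeftIdeal L) {K : Set S} (hK : IsIdeal K) :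
    IsMinRelLeftIdeal K L := by
  refine ⟨⟨hL.1.1, hL.subset_of_isIdeal hK, fun a ha k _ => hL.1.2 a ha k⟩,
    fun L' hL' hsub => hsub.antisymm ?_⟩
  obtain ⟨y, hy⟩ := hL'.1
  obtain ⟨k, hk⟩ := hK.1
  have hKL' : IsLeftIdeal {x | ∃ k ∈ K, ∃ y ∈ L', k * y = x} := by
    refine ⟨⟨k * y, k, hk, y, hy, rfl⟩, ?_⟩
    rintro _ ⟨k, hk, y, hy, rfl⟩ s
    exact ⟨s * k, (hK.2 k hk s).1, y, hy, mul_assoc s k y⟩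
  have hsubL' : {x | ∃ k ∈ K, ∃ y ∈ L', k * y = x} ⊆ L' := by
    rintro _ ⟨k, hk, y, hy, rfl⟩
    exact hL'.2.2 y hy k hk
  rw [← hL.2 _ (hsubL'.trans hsub) hKL']
  exact hsubL'

theorem isMinRelRightIdeal_image_mul_left (hL : IsMinLeftIdeal L) {K : Set S} (hK : IsIdeal K)
    {e : S} (he : e ∈ L) (hee : IsIdempotentElem e) : IsMinRelRightIdeal K ((e * ·) '' K) := by
  have heK : e ∈ K := hL.subset_of_isIdeal hK he
  refine ⟨⟨⟨e * e, e, heK, rfl⟩, ?_, ?_⟩, fun R' hR' hsub => hsub.antisymm ?_⟩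
  · rintro _ ⟨k, hk, rfl⟩
    exact (hK.2 k hk e).1
  · rintro _ ⟨k, hk, rfl⟩ k' hk'
    exact ⟨k * k', (hK.2 k hk k').2, (mul_assoc e k k').symm⟩
  obtain ⟨b, hb⟩ := hR'.1
  have heb : e * b = b := by
    obtain ⟨k, -, hkb⟩ := hsub hb
    rw [← hkb, ← mul_assoc, hee]
  obtain ⟨s, hs⟩ := hL.exists_mul_eq (hL.1.2 e he b) he
  -- `j` is an idempotent of `L` fixed by `e` on the left, hence `e = b * (e * s * e) ∈ R'`.
  set j := b * (e * s * e)
  have hjL : j ∈ L := by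
    rw [show j = b * e * s * e by simp only [j, mul_assoc]]
    exact hL.1.2 e he _
  have hjj : IsIdempotentElem j :=
    calc j * j = b * e * (s * (e * b * e)) * s * e := by simp only [j, mul_assoc]
      _ = j := by rw [heb, hs, mul_assoc b e e, hee]; simp only [j, mul_assoc]
  have hej : e * j = j := by simp only [j, ← mul_assoc, heb]
  have heR' : e ∈ R' := by
    rw [← hL.eq_of_isIdempotentElem he hjL hjj hej]
    exact hR'.2.2 b hb _ (hK.2 _ (hK.2 e heK s).2 e).2
  rintro _ ⟨k, hk, rfl⟩
  exact hR'.2.2 e heR' k hk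

end IsMinLeftIdeal

theorem IsMinIdeal.eq_of_isRelIdeal {K I : Set S} (hK : IsMinIdeal K) (hI : IsRelIdeal K I) :
    I = K := by
  obtain ⟨⟨a, ha⟩, hIK, hclosed⟩ := hI
  obtain ⟨k, hk⟩ := hK.1.1
  have hKaK : IsIdeal {x | ∃ p ∈ K, ∃ q ∈ K, p * a * q = x} := by
    refine ⟨⟨k * a * k, k, hk, k, hk, rfl⟩, ?_⟩
    rintro _ ⟨p, hp, q, hq, rfl⟩ s
    exact ⟨⟨s * p, (hK.1.2 p hp s).1, q, hq, by simp only [mul_assoc]⟩,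
      ⟨p, hp, q * s, (hK.1.2 q hq s).2, by simp only [mul_assoc]⟩⟩
  refine hIK.antisymm fun x hx => ?_
  obtain ⟨p, hp, q, hq, rfl⟩ := hK.2 _ hKaK hx
  exact (hclosed _ (hclosed a ha p hp).1 q hq).2

namespace IsAbsorbing

variable {V : Set S}

theorem exists_isMinLeftIdeal_range_mul_right (hVfin : V.Finite) (hV : IsAbsorbing V) :
    ∃ v : S, IsMinLeftIdeal (Set.range (· * v)) := by
  have hcover : ∀ L : Set S, IsLeftIdeal L → ∃ v ∈ V, Set.range (· * v) ⊆ L := by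
    intro L hL
    obtain ⟨a, ha⟩ := hL.1
    obtain ⟨u, -, v, hv, huv⟩ := hV a
    exact ⟨v, hv, by rintro _ ⟨s, rfl⟩; exact hL.2 v (huv ▸ hL.2 a ha u) s⟩
  obtain ⟨u, hu, -⟩ := hV 1
  obtain ⟨v₀, -, hmin⟩ :=
    hVfin.exists_minimalFor (fun v : S => Set.range (· * v)) V ⟨u, hu⟩
  refine ⟨v₀, isLeftIdeal_range_mul_right v₀, fun L' hsub hL' => hsub.antisymm ?_⟩
  obtain ⟨v, hv, hvL'⟩ := hcover L' hL'
  exact (hmin hv (hvL'.trans hsub)).trans hvL'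

theorem exists_pow_add_two_eq (hVfin : V.Finite) (hV : IsAbsorbing V) {a : S}
    (ha : IsMinLeftIdeal (Set.range (· * a))) : ∃ r, a ^ (r + 2) = a := by
  choose u hu v hv huv using fun n : ℕ => hV (a ^ (n + 1))
  obtain ⟨m, n, hmn, hpair⟩ := Set.Finite.exists_lt_map_eq_of_forall_mem
    (f := fun n => (u n, v n)) (fun n => Set.mk_mem_prod (hu n) (hv n)) (hVfin.prod hVfin)
  simp only [Prod.mk.injEq] at hpair
  obtain ⟨s, hs⟩ : ∃ s, s * v m = a := ha.exists_mul_eq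
    ⟨u m * a ^ m, show u m * a ^ m * a = v m by rw [mul_assoc, ← pow_succ, huv]⟩ ⟨1, one_mul a⟩
  refine ⟨n - m - 1, ?_⟩
  calc a ^ (n - m - 1 + 2) = a * a ^ (n - m) := by rw [← pow_succ']; congr 1; omega
    _ = s * (u m * a ^ (m + 1)) * a ^ (n - m) := by rw [huv, hs]
    _ = s * (u n * a ^ (n + 1)) := by
      rw [mul_assoc, mul_assoc, ← pow_add, hpair.1, show m + 1 + (n - m) = n + 1 by omega]
    _ = a := by rw [huv, ← hpair.2, hs]

theorem finite_setOf_mul_eq_self (hVfin : V.Finite) (hV : IsAbsorbing V) {L : Set S}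
    (hL : IsMinLeftIdeal L) {f : S} (hf : f ∈ L) : {b | f * b = b}.Finite := by
  choose w hw using fun u => hL.exists_mul_eq (hL.1.2 f hf (f * u)) hf
  refine (hVfin.image2 (fun u v => w u * (f * v)) hVfin).subset fun b hb => ?_
  obtain ⟨u, hu, v, hv, rfl⟩ := hV b
  have hb' : f * b = b := hb
  refine ⟨u, hu, u * b, hv, Eq.symm ?_⟩
  calc b = w u * (f * u * f) * b := by rw [hw, hb']
    _ = w u * (f * (u * (f * b))) := by simp only [mul_assoc]
    _ = w u * (f * (u * b)) := by rw [hb']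

theorem finite_rClass (hVfin : V.Finite) (hV : IsAbsorbing V) {a : S}
    (ha : IsMinLeftIdeal (Set.range (· * a))) (K : Set S) :
    {b ∈ K | relLeR K a b ∧ relLeR K b a}.Finite := by
  obtain ⟨r, hr⟩ := hV.exists_pow_add_two_eq hVfin ha
  have hfa : a ^ (r + 1) * a = a := by rw [← pow_succ, hr]
  refine (hV.finite_setOf_mul_eq_self hVfin ha (pow_succ_mem_range_mul_right a r)).subset ?_
  rintro b ⟨-, -, rfl | ⟨k, -, rfl⟩⟩
  · exact hfa
  · show _ * (a * k) = a * k
    rw [← mul_assoc, hfa]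

end IsAbsorbing

namespace IsMinRelRightIdeal

variable {K R : Set S}

theorem image_mul_left_eq (hR : IsMinRelRightIdeal K R) (hK : IsIdeal K) {x : S} (hx : x ∈ R) :
    (x * ·) '' K = R := by
  have hxK := hR.1.2.1 hx
  refine hR.2 _ ⟨⟨x * x, x, hxK, rfl⟩, ?_, ?_⟩ ?_
  · rintro _ ⟨k, hk, rfl⟩
    exact (hK.2 k hk x).1
  · rintro _ ⟨k, hk, rfl⟩ k' hk'
    exact ⟨k * k', (hK.2 k hk k').2, (mul_assoc x k k').symm⟩
  · rintro _ ⟨k, hk, rfl⟩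
    exact hR.1.2.2 x hx k hk

theorem isAbsorbing (hR : IsMinRelRightIdeal K R) (hK : IsIdeal K) : IsAbsorbing R := by
  intro a
  obtain ⟨x, hx⟩ := hR.1.1
  have hxR := hR.image_mul_left_eq hK hx
  obtain ⟨k, hk, hxk : x * k = x⟩ : x ∈ (x * ·) '' K := hxR ▸ hx
  refine ⟨x, hx, x * a, ?_, rfl⟩
  rw [← hxR]
  exact ⟨k * a, (hK.2 k hk a).2, show x * (k * a) = x * a by rw [← mul_assoc, hxk]⟩

theorem subset_rClass (hR : IsMinRelRightIdeal K R) (hK : IsIdeal K) {x : S} (hx : x ∈ R) :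
    R ⊆ {b ∈ K | relLeR K x b ∧ relLeR K b x} := by
  intro y hy
  obtain ⟨k, hk, hyk⟩ : x ∈ (y * ·) '' K := (hR.image_mul_left_eq hK hy).symm ▸ hx
  obtain ⟨k', hk', hxk'⟩ : y ∈ (x * ·) '' K := (hR.image_mul_left_eq hK hx).symm ▸ hy
  exact ⟨hR.1.2.1 hy, Or.inr ⟨k, hk, hyk.symm⟩, Or.inr ⟨k', hk', hxk'.symm⟩⟩

end IsMinRelRightIdeal

end

/-- A monoid is finitely absorbed iff it has a completely simple minimal ideal whose
`R`-classes are all finite. -/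
theorem finitely_absorbed_iff_completely_simple_min_ideal_finite_R_classes
    {S : Type*} [Monoid S] :
    (∃ V : Finset S, ∀ a : S, ∃ u ∈ V, ∃ v ∈ V, u * a = v) ↔
    (∃ K : Set S, IsMinIdeal K ∧ IsCompletelySimple K ∧
      ∀ a ∈ K, {b ∈ K | relLeR K a b ∧ relLeR K b a}.Finite) := by
  constructor
  · rintro ⟨V, hV⟩
    have hVfin := V.finite_toSet
    have hV : IsAbsorbing (V : Set S) := hV
    obtain ⟨v, hL⟩ := hV.exists_isMinLeftIdeal_range_mul_right hVfin
    obtain ⟨r, hr⟩ := hV.exists_pow_add_two_eq hVfin hL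
    have hK := hL.isMinIdeal_mul_univ
    refine ⟨_, hK, ⟨fun _ => hK.eq_of_isRelIdeal, ⟨_, hL.isMinRelLeftIdeal hK.1⟩, ⟨_,
      hL.isMinRelRightIdeal_image_mul_left hK.1 (pow_succ_mem_range_mul_right v r)
        (isIdempotentElem_pow_succ_of_pow_add_two_eq hr)⟩⟩,
      fun a ha => hV.finite_rClass hVfin (hL.isMinLeftIdeal_range_mul_right ha) _⟩
  · rintro ⟨K, hK, ⟨-, -, R, hR⟩, hfin⟩
    obtain ⟨x, hx⟩ := hR.1.1
    have hRfin : R.Finite :=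
      (hfin x (hR.1.2.1 hx)).subset (IsMinRelRightIdeal.subset_rClass hR hK.1 hx)
    have hRabs := IsMinRelRightIdeal.isAbsorbing hR hK.1
    rw [← hRfin.coe_toFinset] at hRabs
    exact ⟨hRfin.toFinset, hRabs⟩
end

section
/- For a monoid S the following are equivalent: (1) S is right pseudo-finite and right reversible; (2) S has a minimal ideal isomorphic to L × G with L a left zero semigroup and G a finite group; (3) S is right pseudo-finite and has a single minimal left ideal. -/
/-- A monoid `S` is right reversible if for all `a b` there are `u v` with `ua = vb`. -/
def RightReversible (S : Type*) [Monoid S] : Prop :=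
  ∀ a b : S, ∃ u v : S, u * a = v * b

namespace RPF

universe u

variable {S : Type*} [Monoid S]

variable {S : Type*} [Monoid S]

lemma clm_list (hrev : RightReversible S) (l : List S) :
    ∃ w : S, ∀ x ∈ l, ∃ c : S, c * x = w := by
  induction l with
  | nil => exact ⟨1, by simp⟩
  | cons a t ih =>
      obtain ⟨w, hw⟩ := ih
      obtain ⟨u, v, huv⟩ := hrev a w
      refine ⟨u * a, ?_⟩
      intro x hx
      rcases List.mem_cons.mp hx with rfl | hx
      · exact ⟨u, rfl⟩
      · obtain ⟨c, hc⟩ := hw x hx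
        exact ⟨v * c, by rw [mul_assoc, hc, ← huv]⟩

lemma choose_total {α : Type*} {P : α → Prop} {Q : α → α → Prop}
    (h : ∀ x, P x → ∃ c, Q x c) : ∃ f : α → α, ∀ x, P x → Q x (f x) := by
  have h' : ∀ x, ∃ c, P x → Q x c := by
    intro x
    by_cases hx : P x
    · exact (h x hx).imp fun c hc _ => hc
    · exact ⟨x, fun h' => absurd h' hx⟩
  choose f hf using h'
  exact ⟨f, hf⟩

lemma key (hrev : RightReversible S) (X : Finset S) :
    ∀ n : ℕ, ∃ P Q : Set S, P.Finite ∧ Q.Finite ∧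
      ∀ a b : S, seqN (mStep (X : Set S)) n a b → ∃ p ∈ P, ∃ q ∈ Q, p * a = q * b := by
  intro n
  induction n with
  | zero =>
      refine ⟨{1}, {1}, Set.finite_singleton _, Set.finite_singleton _, ?_⟩
      intro a b h
      have hab : a = b := h
      exact ⟨1, rfl, 1, rfl, by rw [hab]⟩
  | succ n ih =>
      obtain ⟨P, Q, hPf, hQf, hPQ⟩ := ih
      obtain ⟨w, hw⟩ := clm_list hrev X.toList
      have hc0 : ∀ x : S, x ∈ (X : Set S) → ∃ c, c * x = w := fun x hx =>
        hw x (Finset.mem_toList.mpr hx)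
      obtain ⟨c, hc⟩ := choose_total hc0
      have huv0 : ∀ yp : S × S, ∃ uv : S × S, uv.1 * c yp.1 = uv.2 * yp.2 := by
        intro yp
        obtain ⟨u, v, h⟩ := hrev (c yp.1) yp.2
        exact ⟨(u, v), h⟩
      choose uv huv using huv0
      refine ⟨(fun t : (S × S) × S => (uv (t.1.2, t.2)).1 * c t.1.1) ''
                (((X : Set S) ×ˢ (X : Set S)) ×ˢ P),
              (fun t : (S × S) × S => (uv (t.1.1, t.1.2)).2 * t.2) ''
                (((X : Set S) ×ˢ P) ×ˢ Q),
              ((X.finite_toSet.prod X.finite_toSet).prod hPf).image _,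
              ((X.finite_toSet.prod hPf).prod hQf).image _, ?_⟩
      intro a b hseq
      obtain ⟨a₁, hstep, hrest⟩ := hseq
      obtain ⟨x, hx, y, hy, s, rfl, rfl⟩ := hstep
      obtain ⟨p, hp, q, hq, hpq⟩ := hPQ _ b hrest
      refine ⟨(uv (y, p)).1 * c x, ⟨((x, y), p), ⟨⟨hx, hy⟩, hp⟩, rfl⟩,
              (uv (y, p)).2 * q, ⟨((y, p), q), ⟨⟨hy, hp⟩, hq⟩, rfl⟩, ?_⟩
      have h1 : c x * x = w := hc x hx
      have h2 : c y * y = w := hc y hy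
      have h3 : (uv (y, p)).1 * c y = (uv (y, p)).2 * p := huv (y, p)
      calc ((uv (y,p)).1 * c x) * (x * s)
          = (uv (y,p)).1 * ((c x * x) * s) := by simp [mul_assoc]
        _ = (uv (y,p)).1 * ((c y * y) * s) := by rw [h1, h2]
        _ = ((uv (y,p)).1 * c y) * (y * s) := by simp [mul_assoc]
        _ = ((uv (y,p)).2 * p) * (y * s) := by rw [h3]
        _ = (uv (y,p)).2 * (p * (y * s)) := by rw [mul_assoc]
        _ = (uv (y,p)).2 * (q * b) := by rw [hpq]
        _ = ((uv (y,p)).2 * q) * b := by rw [mul_assoc]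


lemma idem_of_pow {x : S} {a p : ℕ} (ha : 1 ≤ a) (hp : 1 ≤ p) (h : x ^ a = x ^ (a + p)) :
    x ^ (a * p) * x ^ (a * p) = x ^ (a * p) ∧ 1 ≤ a * p := by
  have step : ∀ m, a ≤ m → x ^ (m + p) = x ^ m := by
    intro m hm
    obtain ⟨d, rfl⟩ := Nat.exists_eq_add_of_le hm
    have : a + d + p = (a + p) + d := by omega
    rw [this, pow_add, ← h, ← pow_add]
  have iter : ∀ k m, a ≤ m → x ^ (m + k * p) = x ^ m := by
    intro k
    induction k with
    | zero => intro m hm; simp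
    | succ k ih =>
        intro m hm
        have : m + (k + 1) * p = (m + k * p) + p := by ring
        rw [this, step _ (le_trans hm (Nat.le_add_right _ _)), ih m hm]
  have hap : a ≤ a * p := Nat.le_mul_of_pos_right a hp
  exact ⟨by rw [← pow_add]; exact iter a (a * p) hap, le_trans ha hap⟩

lemma exists_idem {T : Set S} (hT : T.Finite) {x : S} (hx : x ∈ T)
    (hcl : ∀ a ∈ T, ∀ b ∈ T, a * b ∈ T) : ∃ e ∈ T, e * e = e := by
  have hpow : ∀ n : ℕ, x ^ (n + 1) ∈ T := by
    intro n
    induction n with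
    | zero => simpa using hx
    | succ n ih => rw [pow_succ]; exact hcl _ ih _ hx
  haveI := hT.to_subtype
  obtain ⟨i, j, hne, hij⟩ :=
    Finite.exists_ne_map_eq_of_infinite (fun n : ℕ => (⟨x ^ (n + 1), hpow n⟩ : T))
  have hij' : x ^ (i + 1) = x ^ (j + 1) := congrArg Subtype.val hij
  -- wlog i < j
  have main : ∀ i j : ℕ, i < j → x ^ (i + 1) = x ^ (j + 1) → ∃ e ∈ T, e * e = e := by
    intro i j hlt heq
    have hpq : (i + 1) + (j - i) = j + 1 := by omega
    have heq' : x ^ (i + 1) = x ^ ((i + 1) + (j - i)) := by rw [hpq]; exact heq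
    obtain ⟨hid, hge⟩ := idem_of_pow (by omega) (by omega) heq'
    obtain ⟨m, hm⟩ := Nat.exists_eq_add_of_le hge
    refine ⟨x ^ ((i + 1) * (j - i)), ?_, hid⟩
    have : (i + 1) * (j - i) = m + 1 := by omega
    rw [this]; exact hpow m
  rcases Nat.lt_or_ge i j with h | h
  · exact main i j h hij'
  · exact main j i (by omega) hij'.symm

lemma exists_z (hrev : RightReversible S)
    (hmaster : ∃ P Q : Set S, P.Finite ∧ Q.Finite ∧
      ∀ a b : S, ∃ p ∈ P, ∃ q ∈ Q, p * a = q * b) :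
    ∃ z : S, (∀ b : S, ∃ t : S, t * b = z) ∧ {r : S | ∃ s : S, z * (s * z) = r}.Finite := by
  obtain ⟨P, Q, hPf, hQf, hPQ⟩ := hmaster
  obtain ⟨z, hz0⟩ := clm_list hrev hPf.toFinset.toList
  have hz1 : ∀ p ∈ P, ∃ d : S, d * p = z := by
    intro p hp
    exact hz0 p (Finset.mem_toList.mpr (hPf.mem_toFinset.mpr hp))
  obtain ⟨d, hd⟩ := choose_total hz1
  have hz : ∀ b : S, ∃ t : S, t * b = z := by
    intro b
    obtain ⟨p, hp, q, hq, hpq⟩ := hPQ 1 b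
    refine ⟨d p * q, ?_⟩
    rw [mul_assoc, ← hpq, mul_one, hd p hp]
  refine ⟨z, hz, ?_⟩
  have hsub : {r : S | ∃ s : S, z * (s * z) = r} ⊆
      (fun t : S × S => d t.1 * t.2) '' (P ×ˢ Q) := by
    rintro r ⟨s, rfl⟩
    obtain ⟨p, hp, q, hq, hpq⟩ := hPQ (s * z) 1
    rw [mul_one] at hpq
    refine ⟨(p, q), ⟨hp, hq⟩, ?_⟩
    simp only
    rw [← hpq, ← mul_assoc, hd p hp]
  exact ((hPf.prod hQf).image _).subset hsub


lemma min_translate {L : Set S} (h : IsMinLeftIdeal L) (s : S) :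
    IsMinLeftIdeal {a : S | ∃ b ∈ L, b * s = a} := by
  obtain ⟨⟨⟨b0, hb0⟩, hcl⟩, hmin⟩ := h
  refine ⟨⟨⟨b0 * s, b0, hb0, rfl⟩, ?_⟩, ?_⟩
  · rintro a ⟨b, hb, rfl⟩ r
    exact ⟨r * b, hcl b hb r, mul_assoc r b s⟩
  · rintro L'' hsub ⟨⟨c, hc⟩, hcl''⟩
    obtain ⟨b, hb, hbs⟩ := hsub hc
    have hT : {a : S | a ∈ L ∧ a * s ∈ L''} = L := by
      apply hmin
      · exact fun a ha => ha.1
      · refine ⟨⟨b, hb, by rw [hbs]; exact hc⟩, ?_⟩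
        intro a ha r
        exact ⟨hcl a ha.1 r, by rw [mul_assoc]; exact hcl'' _ ha.2 r⟩
    apply Set.Subset.antisymm hsub
    rintro a ⟨b', hb', rfl⟩
    have : b' ∈ {a : S | a ∈ L ∧ a * s ∈ L''} := by rw [hT]; exact hb'
    exact this.2

set_option maxHeartbeats 1000000 in
lemma main12 {S : Type u} [Monoid S] (z : S) (hz : ∀ b : S, ∃ t : S, t * b = z)
    (hRfin : {r : S | ∃ s : S, z * (s * z) = r}.Finite) :
    ∃ K : Set S, IsMinIdeal K ∧
      ∃ (L : Type u) (G : Type u) (_ : Mul L) (_ : Group G) (_ : Finite G),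
        (∀ x y : L, x * y = x) ∧
        ∃ e : K ≃ L × G, ∀ (a b : S) (ha : a ∈ K) (hb : b ∈ K) (hab : a * b ∈ K),
          e ⟨a * b, hab⟩ = e ⟨a, ha⟩ * e ⟨b, hb⟩ := by
  classical
  set K : Set S := {k : S | ∃ t : S, t * z = k} with hKdef
  have hzK : z ∈ K := ⟨1, one_mul z⟩
  have hKl : ∀ k ∈ K, ∀ s : S, s * k ∈ K := by
    rintro k ⟨t, rfl⟩ s
    exact ⟨s * t, mul_assoc s t z⟩
  have hKli : IsLeftIdeal K := ⟨⟨z, hzK⟩, hKl⟩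
  have hKmin : ∀ L' : Set S, IsLeftIdeal L' → K ⊆ L' := by
    rintro L' ⟨⟨b, hb⟩, hcl⟩ k ⟨t, rfl⟩
    obtain ⟨t0, ht0⟩ := hz b
    rw [← ht0, ← mul_assoc]
    exact hcl b hb (t * t0)
  have hKminL : IsMinLeftIdeal K :=
    ⟨hKli, fun L' hsub hL' => Set.Subset.antisymm hsub (hKmin L' hL')⟩
  have hKr : ∀ k ∈ K, ∀ s : S, k * s ∈ K := by
    intro k hk s
    have hmt := min_translate hKminL s
    have hsub : K ⊆ {a : S | ∃ b ∈ K, b * s = a} := hKmin _ hmt.1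
    have heq : K = {a : S | ∃ b ∈ K, b * s = a} := hmt.2 K hsub hKli
    rw [heq]
    exact ⟨k, hk, rfl⟩
  have hsimp : ∀ k ∈ K, ∀ m ∈ K, ∃ t : S, t * k = m := by
    rintro k hk m ⟨u, rfl⟩
    obtain ⟨t0, ht0⟩ := hz k
    exact ⟨u * t0, by rw [mul_assoc, ht0]⟩
  -- the finite subsemigroup zSz
  set R : Set S := {r : S | ∃ s : S, z * (s * z) = r} with hRdef
  have hRK : R ⊆ K := by rintro r ⟨s, rfl⟩; exact ⟨z * s, by rw [mul_assoc]⟩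
  have hRcl : ∀ a ∈ R, ∀ b ∈ R, a * b ∈ R := by
    rintro a ⟨s, rfl⟩ b ⟨s', rfl⟩
    exact ⟨s * (z * (z * s')), by simp [mul_assoc]⟩
  have hxR : z * (1 * z) ∈ R := ⟨1, rfl⟩
  obtain ⟨e, heR, he⟩ := exists_idem hRfin hxR hRcl
  have heK : e ∈ K := hRK heR
  have hre : ∀ k ∈ K, k * e = k := by
    intro k hk
    obtain ⟨t, ht⟩ := hsimp e heK k hk
    rw [← ht, mul_assoc, he]
  -- the group
  set G : Set S := {g : S | ∃ k ∈ K, e * k = g} with hGdef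
  have hGe : e ∈ G := ⟨e, heK, he⟩
  have hGK : G ⊆ K := by rintro g ⟨k, hk, rfl⟩; exact hKl k hk e
  have hGidl : ∀ g ∈ G, e * g = g := by
    rintro g ⟨k, hk, rfl⟩
    rw [← mul_assoc, he]
  have hGcl : ∀ g ∈ G, ∀ h ∈ G, g * h ∈ G := by
    rintro g ⟨k, hk, rfl⟩ h hh
    exact ⟨k * h, hKr k hk h, (mul_assoc e k h).symm⟩
  have hGinv : ∀ g : S, g ∈ G → ∃ h : S, h ∈ G ∧ h * g = e ∧ g * h = e := by
    have hlinv : ∀ g ∈ G, ∃ h ∈ G, h * g = e := by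
      intro g hg
      obtain ⟨t, ht⟩ := hsimp g (hGK hg) e heK
      refine ⟨e * (t * e), ⟨t * e, hKl e heK t, rfl⟩, ?_⟩
      rw [mul_assoc, mul_assoc, hGidl g hg, ht, he]
    intro g hg
    obtain ⟨h, hh, hhg⟩ := hlinv g hg
    obtain ⟨h2, hh2, hh2h⟩ := hlinv h hh
    have hg2 : g = h2 := by
      calc g = e * g := (hGidl g hg).symm
        _ = (h2 * h) * g := by rw [hh2h]
        _ = h2 * (h * g) := mul_assoc _ _ _
        _ = h2 * e := by rw [hhg]
        _ = h2 := hre h2 (hGK hh2)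
    exact ⟨h, hh, hhg, by rw [hg2]; exact hh2h⟩
  obtain ⟨ι, hι⟩ := choose_total hGinv
  have huniq : ∀ g ∈ G, ∀ h₁ h₂ : S, h₁ ∈ K → h₂ ∈ G → h₁ * g = e → g * h₂ = e → h₁ = h₂ := by
    intro g hg h₁ h₂ hh₁ hh₂ H1 H2
    calc h₁ = h₁ * e := (hre h₁ hh₁).symm
      _ = h₁ * (g * h₂) := by rw [H2]
      _ = (h₁ * g) * h₂ := (mul_assoc _ _ _).symm
      _ = e * h₂ := by rw [H1]
      _ = h₂ := hGidl h₂ hh₂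
  have hanti : ∀ g ∈ G, ∀ h ∈ G, ι (g * h) = ι h * ι g := by
    intro g hg h hh
    have hgh := hGcl g hg h hh
    obtain ⟨hm, hl, hr⟩ := hι (g * h) hgh
    obtain ⟨hgm, hgl, hgr⟩ := hι g hg
    obtain ⟨hhm, hhl, hhr⟩ := hι h hh
    refine huniq (g * h) hgh _ _ (hGK hm) (hGcl _ hhm _ hgm) hl ?_
    calc (g * h) * (ι h * ι g) = g * ((h * ι h) * ι g) := by simp [mul_assoc]
      _ = g * (e * ι g) := by rw [hhr]
      _ = g * ι g := by rw [hGidl _ hgm]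
      _ = e := hgr
  -- idempotents
  have hgidem : ∀ g ∈ G, g * g = g → g = e := by
    intro g hg hgg
    obtain ⟨hm, hl, _⟩ := hι g hg
    calc g = e * g := (hGidl g hg).symm
      _ = (ι g * g) * g := by rw [hl]
      _ = ι g * (g * g) := mul_assoc _ _ _
      _ = ι g * g := by rw [hgg]
      _ = e := hl
  have hefe : ∀ f : S, f ∈ K → f * f = f → e * f = e := by
    intro f hf hff
    refine hgidem (e * f) ⟨f, hf, rfl⟩ ?_
    calc (e * f) * (e * f) = e * ((f * e) * f) := by simp [mul_assoc]
      _ = e * (f * f) := by rw [hre f hf]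
      _ = e * f := by rw [hff]
  set L : Set S := {f : S | f ∈ K ∧ f * f = f} with hLdef
  have hkf : ∀ k ∈ K, ∀ f ∈ L, k * f = k := by
    intro k hk f hf
    calc k * f = (k * e) * f := by rw [hre k hk]
      _ = k * (e * f) := mul_assoc _ _ _
      _ = k * e := by rw [hefe f hf.1 hf.2]
      _ = k := hre k hk
  have hGmem : ∀ k ∈ K, e * k ∈ G := fun k hk => ⟨k, hk, rfl⟩
  have hLdec : ∀ k ∈ K, k * ι (e * k) ∈ L := by
    intro k hk
    obtain ⟨hm, hl, hr⟩ := hι (e * k) (hGmem k hk)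
    have hmK : k * ι (e * k) ∈ K := hKr k hk _
    have hem : e * (k * ι (e * k)) = e := by
      rw [← mul_assoc]
      exact hr
    refine ⟨hmK, ?_⟩
    calc (k * ι (e * k)) * (k * ι (e * k))
        = ((k * ι (e * k)) * e) * (k * ι (e * k)) := by rw [hre _ hmK]
      _ = (k * ι (e * k)) * (e * (k * ι (e * k))) := mul_assoc _ _ _
      _ = (k * ι (e * k)) * e := by rw [hem]
      _ = k * ι (e * k) := hre _ hmK
  have heq2 : ∀ a ∈ K, ∀ b ∈ K, (e * a) * (e * b) = e * (a * b) := by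
    intro a ha b hb
    calc (e * a) * (e * b) = ((e * a) * e) * b := (mul_assoc _ _ _).symm
      _ = (e * a) * b := by rw [hre (e * a) (hKl a ha e)]
      _ = e * (a * b) := mul_assoc _ _ _
  have heqX : ∀ a ∈ K, ∀ b ∈ K, (a * b) * ι (e * (a * b)) = a * ι (e * a) := by
    intro a ha b hb
    have h2 : e * (a * b) = (e * a) * (e * b) := (heq2 a ha b hb).symm
    rw [h2, hanti (e * a) (hGmem a ha) (e * b) (hGmem b hb)]
    calc (a * b) * (ι (e * b) * ι (e * a))
        = (a * (b * ι (e * b))) * ι (e * a) := by simp [mul_assoc]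
      _ = a * ι (e * a) := by rw [hkf a ha _ (hLdec b hb)]
  -- finiteness of G
  have hGR : G ⊆ R := by
    rintro g ⟨k, hk, rfl⟩
    obtain ⟨s0, hs0⟩ := heR
    obtain ⟨t, ht⟩ := hk
    exact ⟨s0 * (z * t), by rw [← hs0, ← ht]; simp [mul_assoc]⟩
  haveI hGfin : Finite ↥G := (hRfin.subset hGR).to_subtype
  -- instances
  letI instLmul : Mul ↥L := ⟨fun a _ => a⟩
  letI instGmul : Mul ↥G := ⟨fun g h => ⟨g.1 * h.1, hGcl _ g.2 _ h.2⟩⟩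
  letI instGone : One ↥G := ⟨⟨e, hGe⟩⟩
  letI instGinv : Inv ↥G := ⟨fun g => ⟨ι g.1, (hι g.1 g.2).1⟩⟩
  letI instG : Group ↥G := Group.ofLeftAxioms
    (fun a b c => Subtype.ext (mul_assoc _ _ _))
    (fun a => Subtype.ext (hGidl a.1 a.2))
    (fun a => Subtype.ext ((hι a.1 a.2).2.1))
  -- the equivalence
  have hψK : ∀ fg : ↥L × ↥G, fg.1.1 * fg.2.1 ∈ K := fun fg => hKr _ fg.1.2.1 _
  refine ⟨K, ?_, ↥L, ↥G, instLmul, instG, hGfin, fun x y => rfl,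
    ⟨⟨fun k => (⟨k.1 * ι (e * k.1), hLdec k.1 k.2⟩, ⟨e * k.1, hGmem k.1 k.2⟩),
      fun fg => ⟨fg.1.1 * fg.2.1, hψK fg⟩, ?_, ?_⟩, ?_⟩⟩
  · -- IsMinIdeal
    refine ⟨⟨⟨z, hzK⟩, fun a ha s => ⟨hKl a ha s, hKr a ha s⟩⟩, ?_⟩
    rintro I hI k ⟨t, rfl⟩
    obtain ⟨i, hi⟩ := hI.1
    obtain ⟨t0, ht0⟩ := hz i
    have hzI : z ∈ I := by rw [← ht0]; exact (hI.2 i hi t0).1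
    exact (hI.2 z hzI t).1
  · -- left_inv
    intro k
    apply Subtype.ext
    obtain ⟨hm, hl, hr⟩ := hι (e * k.1) (hGmem k.1 k.2)
    calc (k.1 * ι (e * k.1)) * (e * k.1)
        = k.1 * (ι (e * k.1) * (e * k.1)) := mul_assoc _ _ _
      _ = k.1 * e := by rw [hl]
      _ = k.1 := hre k.1 k.2
  · -- right_inv
    rintro ⟨f, g⟩
    have hsnd : e * (f.1 * g.1) = g.1 := by
      rw [← mul_assoc, hefe f.1 f.2.1 f.2.2, hGidl g.1 g.2]
    have hfst : (f.1 * g.1) * ι (e * (f.1 * g.1)) = f.1 := by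
      rw [hsnd, mul_assoc, (hι g.1 g.2).2.2, hre f.1 f.2.1]
    exact Prod.ext (Subtype.ext hfst) (Subtype.ext hsnd)
  · -- multiplicativity
    intro a b ha hb hab
    exact Prod.ext (Subtype.ext (heqX a ha b hb)) (Subtype.ext (heq2 a ha b hb).symm)


lemma rev_of_unique {S : Type u} [Monoid S]
    (h : ∃ L : Set S, IsMinLeftIdeal L ∧ ∀ L' : Set S, IsMinLeftIdeal L' → L' = L) :
    RightReversible S := by
  obtain ⟨L, hL, huniq⟩ := h
  obtain ⟨⟨⟨k, hk⟩, hcl⟩, hmin⟩ := hL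
  intro a b
  have hra : ∀ s : S, ∀ x ∈ L, x * s ∈ L := by
    intro s x hx
    have heq := huniq _ (min_translate ⟨⟨⟨k, hk⟩, hcl⟩, hmin⟩ s)
    rw [← heq]
    exact ⟨x, hx, rfl⟩
  have hka : k * a ∈ L := hra a k hk
  have hkb : k * b ∈ L := hra b k hk
  have hSL : {m : S | ∃ t : S, t * (k * b) = m} = L := by
    apply hmin
    · rintro m ⟨t, rfl⟩; exact hcl _ hkb t
    · exact ⟨⟨k * b, 1, one_mul _⟩, by rintro m ⟨t, rfl⟩ s; exact ⟨s * t, mul_assoc s t (k * b)⟩⟩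
  have hmem : k * a ∈ {m : S | ∃ t : S, t * (k * b) = m} := by rw [hSL]; exact hka
  obtain ⟨t, ht⟩ := hmem
  exact ⟨k, t * k, by rw [← ht, mul_assoc]⟩

set_option maxHeartbeats 1000000 in
lemma h23 {S : Type u} [Monoid S]
    (h : ∃ K : Set S, IsMinIdeal K ∧
        ∃ (L : Type u) (G : Type u) (_ : Mul L) (_ : Group G) (_ : Finite G),
          (∀ x y : L, x * y = x) ∧
          ∃ e : K ≃ L × G, ∀ (a b : S) (ha : a ∈ K) (hb : b ∈ K) (hab : a * b ∈ K),
            e ⟨a * b, hab⟩ = e ⟨a, ha⟩ * e ⟨b, hb⟩) :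
    MRightPF S ∧ ∃ L : Set S, IsMinLeftIdeal L ∧
      ∀ L' : Set S, IsMinLeftIdeal L' → L' = L := by
  classical
  obtain ⟨K, ⟨hKid, _⟩, L, G, iM, iG, iF, hLz, φ, hφ⟩ := h
  obtain ⟨⟨k0, hk0⟩, hKcl⟩ := hKid
  have ha : ∀ a ∈ K, ∀ k ∈ K, ∃ t, t ∈ K ∧ t * a = k := by
    intro a haK k hk
    set p := φ ⟨a, haK⟩ with hp
    set r := φ ⟨k, hk⟩ with hr
    set t' := φ.symm (r.1, r.2 * p.2⁻¹) with ht'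
    refine ⟨t'.1, t'.2, ?_⟩
    have htaK : t'.1 * a ∈ K := (hKcl a haK t'.1).1
    have heq1 : φ ⟨t'.1, t'.2⟩ = (r.1, r.2 * p.2⁻¹) := by
      have he : (⟨t'.1, t'.2⟩ : K) = t' := rfl
      rw [he, ht']
      exact φ.apply_symm_apply _
    have heq2 : φ ⟨t'.1 * a, htaK⟩ = φ ⟨k, hk⟩ := by
      rw [hφ t'.1 a t'.2 haK htaK, heq1, ← hp, ← hr]
      have : (r.1, r.2 * p.2⁻¹) * p = (r.1 * p.1, r.2 * p.2⁻¹ * p.2) := rfl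
      rw [this, hLz r.1 p.1, inv_mul_cancel_right]
    have := φ.injective heq2
    exact congrArg Subtype.val this
  -- idempotent
  set l0 : L := (φ ⟨k0, hk0⟩).1 with hl0
  set eek : K := φ.symm (l0, 1) with heek
  set ee : S := eek.1 with hee
  have heeK : ee ∈ K := eek.2
  have hφee : φ ⟨ee, heeK⟩ = (l0, 1) := by
    have he : (⟨ee, heeK⟩ : K) = eek := rfl
    rw [he, heek]
    exact φ.apply_symm_apply _
  have heei : ee * ee = ee := by
    have hm : ee * ee ∈ K := (hKcl ee heeK ee).1
    have heq2 : φ ⟨ee * ee, hm⟩ = φ ⟨ee, heeK⟩ := by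
      rw [hφ ee ee heeK heeK hm, hφee]
      have : ((l0, 1) : L × G) * (l0, 1) = (l0 * l0, 1 * 1) := rfl
      rw [this, hLz l0 l0, one_mul]
    exact congrArg Subtype.val (φ.injective heq2)
  set A : Set S := {s : S | ∃ h : s ∈ K, (φ ⟨s, h⟩).1 = l0} with hA
  have hAfin : A.Finite := by
    have hfin : Finite ↥A := by
      apply Finite.of_injective (fun s : ↥A => (φ ⟨s.1, s.2.choose⟩).2)
      rintro ⟨s, hs⟩ ⟨t, ht⟩ hst
      simp only at hst
      have h1 : φ ⟨s, hs.choose⟩ = φ ⟨t, ht.choose⟩ := by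
        refine Prod.ext ?_ hst
        rw [hs.choose_spec, ht.choose_spec]
      have h2 : s = t := congrArg Subtype.val (φ.injective h1)
      exact Subtype.ext h2
    exact Set.finite_coe_iff.mp hfin
  have heeA : ee ∈ A := ⟨heeK, by rw [hφee]⟩
  have heeaA : ∀ a : S, ee * a ∈ A := by
    intro a
    have hm : ee * a ∈ K := (hKcl ee heeK a).2
    have h2 : ee * (ee * a) = ee * a := by rw [← mul_assoc, heei]
    have hm2 : ee * (ee * a) ∈ K := (hKcl _ hm ee).1
    refine ⟨hm, ?_⟩
    have heq3 := hφ ee (ee * a) heeK hm hm2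
    have h3 : (⟨ee * (ee * a), hm2⟩ : K) = ⟨ee * a, hm⟩ := Subtype.ext h2
    rw [h3, hφee] at heq3
    have h4 : (φ ⟨ee * a, hm⟩).1 = l0 * (φ ⟨ee * a, hm⟩).1 := congrArg Prod.fst heq3
    rw [h4, hLz]
  -- MRightPF
  refine ⟨⟨insert 1 (insert ee hAfin.toFinset), 3, ?_⟩, ?_⟩
  · intro a b
    set X : Finset S := insert 1 (insert ee hAfin.toFinset) with hX
    have mem1 : (1 : S) ∈ (X : Set S) := by simp [hX]
    have memee : ee ∈ (X : Set S) := by simp [hX]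
    have memea : ∀ c : S, ee * c ∈ (X : Set S) := by
      intro c
      have : ee * c ∈ A := heeaA c
      simp only [hX, Finset.coe_insert, Set.mem_insert_iff, Finset.mem_coe,
        Set.Finite.mem_toFinset]
      tauto
    exact ⟨3, le_refl 3,
      ee * a, ⟨1, mem1, ee, memee, a, (one_mul a).symm, rfl⟩,
      ee * b, ⟨ee * a, memea a, ee * b, memea b, 1, (mul_one _).symm, (mul_one _).symm⟩,
      b, ⟨ee, memee, 1, mem1, b, rfl, (one_mul b).symm⟩, rfl⟩
  -- unique minimal left ideal
  · have hKli : IsLeftIdeal K := ⟨⟨k0, hk0⟩, fun a haK s => (hKcl a haK s).1⟩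
    have hKsubL : ∀ L'' : Set S, IsLeftIdeal L'' → (∃ a, a ∈ L'' ∧ a ∈ K) → K ⊆ L'' := by
      rintro L'' ⟨_, hcl''⟩ ⟨a, haL, haK⟩ k hk
      obtain ⟨t, _, ht⟩ := ha a haK k hk
      rw [← ht]
      exact hcl'' a haL t
    have hKminL : IsMinLeftIdeal K := by
      refine ⟨hKli, fun L'' hsub hL'' => ?_⟩
      obtain ⟨a, haL⟩ := hL''.1
      exact Set.Subset.antisymm hsub (hKsubL L'' hL'' ⟨a, haL, hsub haL⟩)
    refine ⟨K, hKminL, ?_⟩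
    rintro L' ⟨⟨⟨a', ha'⟩, hcl'⟩, hmin'⟩
    have hint : k0 * a' ∈ L' ∩ K := ⟨hcl' a' ha' k0, (hKcl k0 hk0 a').2⟩
    have hLK : L' ∩ K = L' := by
      apply hmin'
      · exact Set.inter_subset_left
      · exact ⟨⟨k0 * a', hint⟩, fun x hx s => ⟨hcl' x hx.1 s, (hKcl x hx.2 s).1⟩⟩
    have hsub' : L' ⊆ K := by rw [← hLK]; exact Set.inter_subset_right
    apply Set.Subset.antisymm hsub'
    exact hKsubL L' ⟨⟨a', ha'⟩, hcl'⟩ ⟨a', ha', hsub' ha'⟩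


lemma master {S : Type*} [Monoid S] (hPF : MRightPF S) (hrev : RightReversible S) :
    ∃ P Q : Set S, P.Finite ∧ Q.Finite ∧ ∀ a b : S, ∃ p ∈ P, ∃ q ∈ Q, p * a = q * b := by
  obtain ⟨X, N, hch⟩ := hPF
  choose P Q h1 h2 h3 using key hrev X
  refine ⟨⋃ n ∈ Set.Iic N, P n, ⋃ n ∈ Set.Iic N, Q n,
    (Set.finite_Iic N).biUnion (fun n _ => h1 n),
    (Set.finite_Iic N).biUnion (fun n _ => h2 n), ?_⟩
  intro a b
  obtain ⟨n, hn, hseq⟩ := hch a b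
  obtain ⟨p, hp, q, hq, h⟩ := h3 n a b hseq
  exact ⟨p, Set.mem_biUnion (Set.mem_Iic.mpr hn) hp,
    q, Set.mem_biUnion (Set.mem_Iic.mpr hn) hq, h⟩

lemma h12 {S : Type u} [Monoid S] (hPF : MRightPF S) (hrev : RightReversible S) :
    ∃ K : Set S, IsMinIdeal K ∧
      ∃ (L : Type u) (G : Type u) (_ : Mul L) (_ : Group G) (_ : Finite G),
        (∀ x y : L, x * y = x) ∧
        ∃ e : K ≃ L × G, ∀ (a b : S) (ha : a ∈ K) (hb : b ∈ K) (hab : a * b ∈ K),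
          e ⟨a * b, hab⟩ = e ⟨a, ha⟩ * e ⟨b, hb⟩ := by
  obtain ⟨z, hz, hRfin⟩ := exists_z hrev (master hPF hrev)
  exact main12 z hz hRfin

end RPF

/-- For a monoid `S` the following are equivalent: (1) `S` is right pseudo-finite and
right reversible; (2) `S` has a minimal ideal isomorphic to `L × G` with `L` a left
zero semigroup and `G` a finite group; (3) `S` is right pseudo-finite and has a single
minimal left ideal. -/
theorem rightPF_rightReversible_tfae {S : Type u} [Monoid S] :
    ((MRightPF S ∧ RightReversible S) ↔
      (∃ K : Set S, IsMinIdeal K ∧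
        ∃ (L : Type u) (G : Type u) (_ : Mul L) (_ : Group G) (_ : Finite G),
          (∀ x y : L, x * y = x) ∧
          ∃ e : K ≃ L × G, ∀ (a b : S) (ha : a ∈ K) (hb : b ∈ K) (hab : a * b ∈ K),
            e ⟨a * b, hab⟩ = e ⟨a, ha⟩ * e ⟨b, hb⟩)) ∧
    ((MRightPF S ∧ RightReversible S) ↔
      (MRightPF S ∧ ∃ L : Set S, IsMinLeftIdeal L ∧
        ∀ L' : Set S, IsMinLeftIdeal L' → L' = L)) := by
  have A : (MRightPF S ∧ RightReversible S) →
      (∃ K : Set S, IsMinIdeal K ∧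
        ∃ (L : Type u) (G : Type u) (_ : Mul L) (_ : Group G) (_ : Finite G),
          (∀ x y : L, x * y = x) ∧
          ∃ e : K ≃ L × G, ∀ (a b : S) (ha : a ∈ K) (hb : b ∈ K) (hab : a * b ∈ K),
            e ⟨a * b, hab⟩ = e ⟨a, ha⟩ * e ⟨b, hb⟩) :=
    fun h => RPF.h12 h.1 h.2
  have B := @RPF.h23 S _
  have C : (MRightPF S ∧ ∃ L : Set S, IsMinLeftIdeal L ∧
        ∀ L' : Set S, IsMinLeftIdeal L' → L' = L) →
      (MRightPF S ∧ RightReversible S) :=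
    fun h => ⟨h.1, RPF.rev_of_unique h.2⟩
  exact ⟨⟨A, fun h => C (B h)⟩, ⟨fun h => B (A h), C⟩⟩
end

section
/- A commutative monoid is right pseudo-finite if and only if it has a minimal ideal that is a finite group. -/
private lemma seqN_mstep_prod {M : Type*} [CommMonoid M] (X : Set M) :
    ∀ n (a b : M), seqN (mStep X) n a b →
      ∃ u v : Multiset M, (∀ z ∈ u, z ∈ X) ∧ (∀ z ∈ v, z ∈ X) ∧
        u.card = n ∧ v.card = n ∧ a * u.prod = b * v.prod := by
  intro n
  induction n with
  | zero =>
    intro a b h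
    have h' : a = b := h
    exact ⟨0, 0, by simp, by simp, by simp, by simp, by simp [h']⟩
  | succ n ih =>
    rintro a b ⟨c, ⟨x, hx, y, hy, s, ha, hc⟩, hseq⟩
    obtain ⟨u, v, hu, hv, hcu, hcv, heq⟩ := ih c b hseq
    refine ⟨y ::ₘ u, x ::ₘ v, ?_, ?_, by simp [hcu], by simp [hcv], ?_⟩
    · intro z hz
      rcases Multiset.mem_cons.mp hz with h | h
      · exact h ▸ hy
      · exact hu z h
    · intro z hz
      rcases Multiset.mem_cons.mp hz with h | h
      · exact h ▸ hx
      · exact hv z h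
    · rw [Multiset.prod_cons, Multiset.prod_cons]
      subst ha hc
      calc x * s * (y * u.prod) = x * (y * s * u.prod) := by
            simp [mul_comm, mul_left_comm, mul_assoc]
        _ = x * (b * v.prod) := by rw [heq]
        _ = b * (x * v.prod) := by simp [mul_comm, mul_left_comm, mul_assoc]

private lemma multiset_le_nsmul {M : Type*} [DecidableEq M] {X : Finset M} {N : ℕ}
    (u : Multiset M) (hu : ∀ z ∈ u, z ∈ X) (hcard : Multiset.card u ≤ N) :
    u ≤ N • X.val := by
  rw [Multiset.le_iff_count]
  intro a
  rw [Multiset.count_nsmul]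
  by_cases h : a ∈ u
  · have h1 : Multiset.count a X.val = 1 :=
      Multiset.count_eq_one_of_mem X.nodup (hu a h)
    rw [h1, mul_one]
    exact le_trans (Multiset.count_le_card a u) hcard
  · simp [Multiset.count_eq_zero_of_notMem h]

/-- A commutative monoid is right pseudo-finite iff it has a minimal ideal that is a
finite group. -/
theorem commMonoid_rightPF_iff_min_ideal_finite_group
    {M : Type*} [CommMonoid M] :
    MRightPF M ↔
    ∃ K : Set M, IsMinIdeal K ∧ K.Finite ∧
      ∃ e ∈ K, (∀ a ∈ K, e * a = a ∧ a * e = a) ∧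
        ∀ a ∈ K, ∃ b ∈ K, a * b = e ∧ b * a = e := by
  classical
  constructor
  · rintro ⟨X, N, hconn⟩
    set T : Multiset M := N • X.val with hT
    set t : M := T.prod with ht
    -- key fact: a * t lies in every principal ideal
    have factA : ∀ a b : M, ∃ c, a * t = b * c := by
      intro a b
      obtain ⟨n, hn, hseq⟩ := hconn a b
      obtain ⟨u, v, hu, hv, hcu, hcv, heq⟩ := seqN_mstep_prod (X : Set M) n a b hseq
      have hule : u ≤ T := multiset_le_nsmul u (by simpa using hu) (by omega)
      obtain ⟨r, hr⟩ := Multiset.prod_dvd_prod_of_le hule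
      refine ⟨v.prod * r, ?_⟩
      rw [ht, hr, ← mul_assoc, heq, mul_assoc]
    obtain ⟨c, hc⟩ := factA 1 (t * t)
    have htc : t = t * t * c := by rwa [one_mul] at hc
    have hee : t * c * (t * c) = t * c := by
      calc t * c * (t * c) = (t * t * c) * c := by
            simp [mul_comm, mul_left_comm, mul_assoc]
        _ = t * c := by rw [← htc]
    refine ⟨Set.range (fun m => t * m), ⟨⟨⟨t, 1, mul_one t⟩, ?_⟩, ?_⟩, ?_,
      t * c, ⟨c, rfl⟩, ?_, ?_⟩
    · rintro a ⟨m, rfl⟩ s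
      exact ⟨⟨s * m, by simp [mul_comm, mul_left_comm, mul_assoc]⟩,
             ⟨m * s, by simp [mul_assoc]⟩⟩
    · -- minimality
      rintro I ⟨⟨b, hb⟩, hI⟩ k ⟨m, rfl⟩
      obtain ⟨d, hd⟩ := factA m b
      show t * m ∈ I
      have h2 : t * m = b * d := by rw [mul_comm]; exact hd
      rw [h2]
      exact (hI b hb d).2
    · -- finiteness
      have hfin : ({u : Multiset M | u ≤ T}).Finite := by
        have h3 : {u : Multiset M | u ≤ T} = {u : Multiset M | u ∈ T.powerset} := by
          ext u; simp [Multiset.mem_powerset]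
        rw [h3]
        exact T.powerset.finite_toSet
      have himg : Set.range (fun m => t * m) ⊆
          Set.image2 (fun u v : Multiset M => u.prod * v.prod)
            {u | u ≤ T} {u | u ≤ T} := by
        rintro k ⟨m, rfl⟩
        obtain ⟨n, hn, hseq⟩ := hconn m 1
        obtain ⟨u, v, hu, hv, hcu, hcv, heq⟩ := seqN_mstep_prod (X : Set M) n m 1 hseq
        rw [one_mul] at heq
        have hule : u ≤ T := multiset_le_nsmul u (by simpa using hu) (by omega)
        have hvle : v ≤ T := multiset_le_nsmul v (by simpa using hv) (by omega)
        have hsub : T - u ≤ T := tsub_le_self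
        have hsplit : (T - u) + u = T := tsub_add_cancel_of_le hule
        refine ⟨v, hvle, T - u, hsub, ?_⟩
        have h4 : t = (T - u).prod * u.prod := by
          rw [ht, ← Multiset.prod_add, hsplit]
        show v.prod * (T - u).prod = t * m
        calc v.prod * (T - u).prod = (m * u.prod) * (T - u).prod := by rw [heq]
          _ = t * m := by rw [h4]; simp [mul_comm, mul_left_comm, mul_assoc]
      exact ((Set.Finite.image2 _ hfin hfin).subset himg)
    · -- identity property
      rintro a ⟨m, rfl⟩
      constructor
      · calc t * c * (t * m) = (t * t * c) * m := by
              simp [mul_comm, mul_left_comm, mul_assoc]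
          _ = t * m := by rw [← htc]
      · calc (t * m) * (t * c) = (t * t * c) * m := by
              simp [mul_comm, mul_left_comm, mul_assoc]
          _ = t * m := by rw [← htc]
    · -- inverses
      rintro a ⟨m, rfl⟩
      obtain ⟨d, hd⟩ := factA c (t * m)
      have hae : (t * m) * d = t * c := by rw [← hd, mul_comm]
      refine ⟨t * (c * d), ⟨c * d, rfl⟩, ?_, ?_⟩
      · calc (t * m) * (t * (c * d)) = ((t * m) * d) * (t * c) := by
              simp [mul_comm, mul_left_comm, mul_assoc]
          _ = t * c * (t * c) := by rw [hae]
          _ = t * c := hee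
      · calc (t * (c * d)) * (t * m) = ((t * m) * d) * (t * c) := by
              simp [mul_comm, mul_left_comm, mul_assoc]
          _ = t * c * (t * c) := by rw [hae]
          _ = t * c := hee
  · rintro ⟨K, ⟨⟨hKne, hKcl⟩, -⟩, hKfin, e, heK, hid, hinv⟩
    refine ⟨insert 1 hKfin.toFinset, 3, ?_⟩
    intro a b
    have heX : (e : M) ∈ ((insert 1 hKfin.toFinset : Finset M) : Set M) := by
      simp [Set.Finite.mem_toFinset, heK]
    have h1X : (1 : M) ∈ ((insert 1 hKfin.toFinset : Finset M) : Set M) := by simp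
    have heaX : ∀ x : M, (e * x : M) ∈ ((insert 1 hKfin.toFinset : Finset M) : Set M) := by
      intro x
      simp only [Finset.coe_insert, Set.mem_insert_iff, Finset.mem_coe,
        Set.Finite.mem_toFinset]
      exact Or.inr ((hKcl e heK x).2)
    refine ⟨3, le_refl 3, e * a, ⟨1, h1X, e, heX, a, (one_mul a).symm, rfl⟩,
      e * b, ⟨e * a, heaX a, e * b, heaX b, 1, (mul_one _).symm, (mul_one _).symm⟩,
      b, ⟨e, heX, 1, h1X, b, rfl, (one_mul b).symm⟩, rfl⟩
end

section
/- Let S be a J-trivial monoid in which every element has a local zero. Then S is right pseudo-finite if and only if S has a zero element. -/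
/-- common local zero for a finite set -/
lemma common_local_zero {S : Type*} [Monoid S]
    (hJ : ∀ a b : S, (∃ u v : S, a = u * b * v) → (∃ u v : S, b = u * a * v) → a = b)
    (hlz : ∀ a : S, ∃ e : S, e * e = e ∧ a * e = e ∧ e * a = e)
    (X : Finset S) : ∃ e : S, e * e = e ∧ ∀ x ∈ X, e * x = e ∧ x * e = e := by
  classical
  induction X using Finset.induction with
  | empty =>
      obtain ⟨e, he, -, -⟩ := hlz 1
      exact ⟨e, he, by simp⟩
  | @insert b A hb ih =>
      obtain ⟨e, he, hA⟩ := ih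
      obtain ⟨f, hf, hf1, hf2⟩ := hlz (e * b * e)
      -- e * f = f and f * e = f
      have hef : e * f = f := by
        calc e * f = e * (e * b * e * f) := by rw [hf1]
          _ = e * e * b * e * f := by simp [mul_assoc]
          _ = f := by rw [he, hf1]
      have hfe : f * e = f := by
        calc f * e = f * (e * b * e) * e := by rw [hf2]
          _ = f * (e * b * (e * e)) := by simp [mul_assoc]
          _ = f * (e * b * e) := by rw [he]
          _ = f := hf2
      -- f = f * b * f
      have hfbf : f = f * b * f := by
        calc f = f * f := hf.symm
          _ = f * (e * b * e * f) := by rw [hf1]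
          _ = f * e * b * (e * f) := by simp [mul_assoc]
          _ = f * b * f := by rw [hfe, hef]
      have hbf : b * f = f := by
        apply hJ (b * f) f ⟨b, 1, by simp⟩
        exact ⟨f, 1, by simpa [mul_assoc] using hfbf⟩
      have hfb : f * b = f := by
        apply hJ (f * b) f ⟨1, b, by simp⟩
        exact ⟨1, f, by simpa [mul_assoc] using hfbf⟩
      refine ⟨f, hf, ?_⟩
      intro x hx
      rcases Finset.mem_insert.mp hx with h | h
      · subst h; exact ⟨hfb, hbf⟩
      · obtain ⟨h1, h2⟩ := hA x h
        constructor
        · rw [← hfe, mul_assoc, h1, hfe]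
        · rw [← hef, ← mul_assoc, h2, hef]

lemma seqN_left_const {S : Type*} [Monoid S] {X : Finset S} {e : S}
    (he : ∀ x ∈ X, e * x = e) :
    ∀ n a b, seqN (mStep (X : Set S)) n a b → e * a = e * b := by
  intro n
  induction n with
  | zero => intro a b h; rw [h]
  | succ n ih =>
      rintro a b ⟨c, ⟨x, hx, y, hy, s, rfl, rfl⟩, hc⟩
      calc e * (x * s) = e * s := by rw [← mul_assoc, he x hx]
        _ = e * (y * s) := by rw [← mul_assoc, he y hy]
        _ = e * b := ih _ _ hc

/-- A `J`-trivial monoid in which every element has a local zero is right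
pseudo-finite iff it has a zero element. -/
theorem Jtrivial_local_zeros_rightPF_iff_zero {S : Type*} [Monoid S]
    (hJ : ∀ a b : S, (∃ u v : S, a = u * b * v) → (∃ u v : S, b = u * a * v) → a = b)
    (hlz : ∀ a : S, ∃ e : S, e * e = e ∧ a * e = e ∧ e * a = e) :
    MRightPF S ↔ ∃ z : S, ∀ s : S, z * s = z ∧ s * z = z := by
  constructor
  · rintro ⟨X, N, hX⟩
    obtain ⟨e, he, hcom⟩ := common_local_zero hJ hlz X
    have hleft : ∀ a : S, e * a = e := by
      intro a
      obtain ⟨n, -, hn⟩ := hX a e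
      have := seqN_left_const (fun x hx => (hcom x hx).1) n a e hn
      rw [this, he]
    refine ⟨e, fun s => ⟨hleft s, ?_⟩⟩
    apply hJ (s * e) e ⟨s, 1, by simp⟩
    refine ⟨e, 1, ?_⟩
    rw [mul_one, ← mul_assoc, hleft s, he]
  · rintro ⟨z, hz⟩
    classical
    refine ⟨{1, z}, 2, fun a b => ⟨2, le_refl 2, ?_⟩⟩
    refine ⟨z, ⟨1, by simp, z, by simp, a, by simp, ((hz a).1).symm⟩,
      b, ⟨z, by simp, 1, by simp, b, ((hz b).1).symm, by simp⟩, rfl⟩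
end

section
/- A periodic J-trivial monoid is right pseudo-finite if and only if it has a zero. -/
/-- A periodic `J`-trivial monoid is right pseudo-finite iff it has a zero. -/
theorem periodic_Jtrivial_rightPF_iff_zero {S : Type*} [Monoid S]
    (hper : ∀ a : S, ∃ q r : ℕ, 1 ≤ q ∧ 1 ≤ r ∧ a ^ (q + r) = a ^ q)
    (hJ : ∀ a b : S, (∃ u v : S, a = u * b * v) → (∃ u v : S, b = u * a * v) → a = b) :
    MRightPF S ↔ ∃ z : S, ∀ s : S, z * s = z ∧ s * z = z := by
  constructor
  · rintro ⟨X, N, hX⟩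
    set w : S := X.toList.prod with hw
    obtain ⟨q, r, hq1, hr1, hqr⟩ := hper w
    -- aperiodicity at w : w^(q+1) = w^q
    have hstep : w ^ (q + 1) = w ^ q := by
      apply hJ
      · exact ⟨1, w, by rw [one_mul, pow_succ]⟩
      · refine ⟨1, w ^ (r - 1), ?_⟩
        rw [one_mul, ← pow_add]
        have : q + 1 + (r - 1) = q + r := by omega
        rw [this, hqr]
    have hpow : ∀ j : ℕ, w ^ (q + j) = w ^ q := by
      intro j
      induction j with
      | zero => rfl
      | succ k ih =>
        have : q + (k + 1) = (q + k) + 1 := by omega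
        rw [this, pow_succ, ih, ← pow_succ, hstep]
    -- absorption of left factors of w
    have habs : ∀ u v : S, w = u * v → w ^ q * u = w ^ q := by
      intro u v huv
      apply hJ
      · exact ⟨1, u, by rw [one_mul]⟩
      · refine ⟨1, v, ?_⟩
        rw [one_mul, mul_assoc, ← huv, ← pow_succ, hstep]
    -- g absorbs every element of X on the right
    have hgx : ∀ x ∈ X, w ^ q * x = w ^ q := by
      intro x hx
      have hxl : x ∈ X.toList := Finset.mem_toList.mpr hx
      obtain ⟨s, t, hst⟩ := List.append_of_mem hxl
      have hdecomp : w = s.prod * (x * t.prod) := by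
        rw [hw, hst, List.prod_append, List.prod_cons]
      have h1 : w ^ q * s.prod = w ^ q := habs s.prod (x * t.prod) hdecomp
      have h2 : w ^ q * (s.prod * x) = w ^ q := by
        refine habs (s.prod * x) t.prod ?_
        rw [mul_assoc]; exact hdecomp
      calc w ^ q * x = (w ^ q * s.prod) * x := by rw [h1]
        _ = w ^ q * (s.prod * x) := by rw [mul_assoc]
        _ = w ^ q := h2
    -- collapsing sequences
    have hcol : ∀ n : ℕ, ∀ a b : S, seqN (mStep (X : Set S)) n a b →
        w ^ q * a = w ^ q * b := by
      intro n
      induction n with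
      | zero => intro a b h; rw [h]
      | succ k ih =>
        rintro a b ⟨c, ⟨x, hx, y, hy, s, ha, hc⟩, htail⟩
        have hx' : x ∈ X := hx
        have hy' : y ∈ X := hy
        have : w ^ q * a = w ^ q * c := by
          rw [ha, hc, ← mul_assoc, ← mul_assoc, hgx x hx', hgx y hy']
        rw [this]; exact ih c b htail
    have hall : ∀ s : S, w ^ q * s = w ^ q := by
      intro s
      obtain ⟨n, _, hseq⟩ := hX 1 s
      have := hcol n 1 s hseq
      rw [mul_one] at this
      exact this.symm
    refine ⟨w ^ q, fun s => ⟨hall s, ?_⟩⟩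
    -- s * w^q = w^q by J-triviality
    apply hJ
    · exact ⟨s, 1, by rw [mul_one]⟩
    · refine ⟨w ^ q, 1, ?_⟩
      rw [mul_one, ← mul_assoc, hall s, ← pow_add, hpow q]
  · rintro ⟨z, hz⟩
    classical
    refine ⟨{1, z}, 2, fun a b => ⟨2, le_refl 2, ?_⟩⟩
    refine ⟨z, ⟨1, by simp, z, by simp, a, (one_mul a).symm, ((hz a).1).symm⟩,
      b, ⟨z, by simp, 1, by simp, b, ((hz b).1).symm, (one_mul b).symm⟩, rfl⟩
end

section
/- Let S be a right pseudo-finite monoid such that Green's preorder ≤_J is left compatible with multiplication (u ≤_J v implies au ≤_J av for all a). Then S has a minimal ideal. -/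
section Aux
variable {S : Type*} [Monoid S]

/-- Green's `≤_J` preorder. -/
def LeJ' (u v : S) : Prop := ∃ s t : S, u = s * v * t

lemma leJ'_refl (u : S) : LeJ' u u := ⟨1, 1, by simp⟩

lemma leJ'_trans {u v w : S} (h1 : LeJ' u v) (h2 : LeJ' v w) : LeJ' u w := by
  obtain ⟨p, q, rfl⟩ := h1
  obtain ⟨r, t, rfl⟩ := h2
  exact ⟨p * r, t * q, by simp [mul_assoc]⟩

lemma leJ'_prod_of_mem {l : List S} {x : S} (h : x ∈ l) : LeJ' l.prod x := by
  obtain ⟨l₁, l₂, rfl⟩ := List.append_of_mem h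
  exact ⟨l₁.prod, l₂.prod, by simp [List.prod_append, mul_assoc]⟩

/-- All products of words over `X` of length at most `n` (with repetitions). -/
def cands (X : List S) : ℕ → List S
  | 0 => [1]
  | n + 1 => cands X n ++ X.flatMap (fun x => (cands X n).map (fun p => x * p))

lemma prod_mem_cands (X : List S) : ∀ n (l : List S), (∀ x ∈ l, x ∈ X) →
    l.length ≤ n → l.prod ∈ cands X n := by
  intro n
  induction n with
  | zero =>
    intro l _ hlen
    have : l = [] := List.length_eq_zero_iff.mp (Nat.le_zero.mp hlen)
    subst this; simp [cands]
  | succ n ih =>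
    intro l hmem hlen
    cases l with
    | nil =>
      have : ([] : List S).prod ∈ cands X n := ih [] (by simp) (by simp)
      exact List.mem_append_left _ this
    | cons x l' =>
      have hx : x ∈ X := hmem x (by simp)
      have h' : l'.prod ∈ cands X n :=
        ih l' (fun y hy => hmem y (List.mem_cons_of_mem _ hy))
          (Nat.le_of_succ_le_succ (by simpa using hlen))
      apply List.mem_append_right
      rw [List.prod_cons]
      exact List.mem_flatMap.mpr ⟨x, hx, List.mem_map.mpr ⟨l'.prod, h', rfl⟩⟩

/-- Key lemma: an `X`-sequence from `a` to `1` produces a word over `X` of length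
at most `n` whose product is `≤_J a`. -/
lemma key_lemma (X : Finset S)
    (hcomp : ∀ u v a : S, (∃ s t : S, u = s * v * t) →
      ∃ s t : S, a * u = s * (a * v) * t) :
    ∀ n (a : S), seqN (mStep (X : Set S)) n a 1 →
      ∃ l : List S, (∀ x ∈ l, x ∈ X.val.toList) ∧ l.length ≤ n ∧ LeJ' l.prod a := by
  intro n
  induction n with
  | zero =>
    intro a h
    have ha : a = 1 := h
    exact ⟨[], by simp, by simp, by simp [ha, leJ'_refl]⟩
  | succ n ih =>
    rintro a ⟨c, ⟨x, hx, y, hy, u, rfl, rfl⟩, hseq⟩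
    obtain ⟨l, hlX, hlen, hle⟩ := ih _ hseq
    have h1 : LeJ' (y * u) u := ⟨y, 1, by simp⟩
    have h2 : LeJ' l.prod u := leJ'_trans hle h1
    have h3 : LeJ' (x * l.prod) (x * u) := hcomp l.prod u x h2
    refine ⟨x :: l, ?_, by simpa using Nat.succ_le_succ hlen, ?_⟩
    · intro z hz
      rcases List.mem_cons.mp hz with h | h
      · subst h; exact Multiset.mem_toList.mpr hx
      · exact hlX z h
    · rw [List.prod_cons]; exact h3
end Aux

/-- If `S` is a right pseudo-finite monoid in which Green's preorder `≤_J` is left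
compatible with multiplication, then `S` has a minimal ideal. -/
theorem min_ideal_of_rightPF_leJ_left_compatible {S : Type*} [Monoid S]
    (hpf : MRightPF S)
    (hcomp : ∀ u v a : S, (∃ s t : S, u = s * v * t) →
      ∃ s t : S, a * u = s * (a * v) * t) :
    ∃ K : Set S, IsMinIdeal K := by
  obtain ⟨X, N, hseq⟩ := hpf
  set m : S := (cands X.val.toList N).prod with hm_def
  have hm : ∀ s : S, LeJ' m s := by
    intro s
    obtain ⟨n, hn, hs⟩ := hseq s 1
    obtain ⟨l, hlX, hlen, hle⟩ := key_lemma X hcomp n s hs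
    have h1 : l.prod ∈ cands X.val.toList N :=
      prod_mem_cands _ N l hlX (hlen.trans hn)
    exact leJ'_trans (leJ'_trans (leJ'_prod_of_mem h1) (leJ'_refl _)) hle
  refine ⟨{u | LeJ' u m}, ⟨⟨m, leJ'_refl m⟩, ?_⟩, ?_⟩
  · rintro a ⟨p, q, rfl⟩ s
    exact ⟨⟨s * p, q, by simp [mul_assoc]⟩, ⟨p, q * s, by simp [mul_assoc]⟩⟩
  · rintro I ⟨⟨a0, ha0⟩, hI⟩ u ⟨p, q, rfl⟩
    obtain ⟨r, t, hm0⟩ := hm a0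
    have h1 : r * a0 ∈ I := (hI a0 ha0 r).1
    have h2 : m ∈ I := by rw [hm0]; exact (hI _ h1 t).2
    have h3 : p * m ∈ I := (hI m h2 p).1
    exact (hI _ h3 q).2
end
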